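/- arXiv:2009.10060 — 3 statements merged into one kernel-verified Lean document; each statement's English description precedes it below -/
import Mathlib

section
/- Checking passwords in descending order of probability is optimal: if σ : {1,…,n} → P is a bijection with p(σ(1)) ≥ p(σ(2)) ≥ … ≥ p(σ(n)), then for every bijection π : {1,…,n} → P and every budget 0 ≤ B ≤ n, U(v,k,σ,B) ≥ U(v,k,π,B), provided v ≥ 0 and k ≥ 0. -/
/-! `lam p π b` is the rearrangement sum `∑ i, 𝟙[i < b] * p (π i)`. The weights `𝟙[i < b]` are
antitone in `i`, so by the rearrangement inequality this sum is largest when `p ∘ π` is antitone as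
well. Hence the descending order maximizes every `lam p · b`, and `U` is increasing in each of them
when `v, k ≥ 0`. -/

/- Context: P finite set of passwords, p a probability distribution on P,
strategies (π, B) with π : Fin (Fintype.card P) ≃ P (0-indexed bijection) and B ≤ |P|.
λ(π, B) = Σ_{i=1}^{B} p(π(i)), and
U(v,k,π,B) = v·λ(π,B) − k·Σ_{i=1}^{B} (1 − λ(π, i−1)). -/

variable {P : Type*} [Fintype P]

noncomputable def lam (p : P → ℝ) (π : Fin (Fintype.card P) ≃ P) (B : ℕ) : ℝ :=
  ∑ i ∈ Finset.univ.filter (fun i : Fin (Fintype.card P) => (i : ℕ) < B), p (π i)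

noncomputable def U (p : P → ℝ) (v k : ℝ) (π : Fin (Fintype.card P) ≃ P) (B : ℕ) : ℝ :=
  v * lam p π B - k * ∑ i ∈ Finset.range B, (1 - lam p π i)

lemma lam_eq_sum_ite_mul (p : P → ℝ) (π : Fin (Fintype.card P) ≃ P) (b : ℕ) :
    lam p π b = ∑ i : Fin (Fintype.card P), (if (i : ℕ) < b then 1 else 0) * p (π i) := by
  simp only [lam, Finset.sum_filter, ite_mul, one_mul, zero_mul]

lemma lam_le_lam_of_antitone (p : P → ℝ) (σ π : Fin (Fintype.card P) ≃ P)
    (hσ : Antitone (p ∘ σ)) (b : ℕ) : lam p π b ≤ lam p σ b := by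
  have hind : Antitone fun i : Fin (Fintype.card P) => if (i : ℕ) < b then (1 : ℝ) else 0 :=
    fun i j (hij : i ≤ j) => by grind [Fin.le_def]
  have hrearrange := (hind.monovary hσ).sum_mul_comp_perm_le_sum_mul (σ := π.trans σ.symm)
  simpa [lam_eq_sum_ite_mul] using hrearrange

lemma U_le_U_of_lam_le (p : P → ℝ) {v k : ℝ} (hv : 0 ≤ v) (hk : 0 ≤ k)
    {σ π : Fin (Fintype.card P) ≃ P} (h : ∀ b, lam p π b ≤ lam p σ b) (B : ℕ) :
    U p v k π B ≤ U p v k σ B := by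
  unfold U
  gcongr <;> apply h

theorem descending_order_optimal_general (p : P → ℝ) (v k : ℝ) (hv : 0 ≤ v) (hk : 0 ≤ k)
    (σ : Fin (Fintype.card P) ≃ P)
    (hσ : ∀ i j : Fin (Fintype.card P), i ≤ j → p (σ j) ≤ p (σ i))
    (π : Fin (Fintype.card P) ≃ P) (B : ℕ) :
    U p v k π B ≤ U p v k σ B :=
  U_le_U_of_lam_le p hv hk (lam_le_lam_of_antitone p σ π hσ) B

/-- Checking passwords in descending order of probability is optimal: if σ orders
passwords so that p(σ(1)) ≥ p(σ(2)) ≥ … ≥ p(σ(n)), then for every bijection π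
and every budget B ≤ n, U(v,k,σ,B) ≥ U(v,k,π,B), provided v ≥ 0 and k ≥ 0. -/
theorem descending_order_optimal (p : P → ℝ) (hp : ∀ pw, 0 ≤ p pw)
    (hsum : ∑ pw, p pw = 1) (v k : ℝ) (hv : 0 ≤ v) (hk : 0 ≤ k)
    (σ : Fin (Fintype.card P) ≃ P)
    (hσ : ∀ i j : Fin (Fintype.card P), i ≤ j → p (σ j) ≤ p (σ i))
    (π : Fin (Fintype.card P) ≃ P) (B : ℕ) (hB : B ≤ Fintype.card P) :
    U p v k π B ≤ U p v k σ B :=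
  descending_order_optimal_general p v k hv hk σ hσ π B
end

section
/- Theorem 1 (equivalence classes are checked atomically): let v ≥ 0 and k > 0, and let (π*, B*) be an optimal strategy, i.e., U(v,k,π*,B*) ≥ U(v,k,π,B) for all strategies (π,B). If two passwords pw_i, pw_j ∈ P satisfy p(pw_i) = p(pw_j) > 0, then ind_{π*}(pw_i) ≤ B* if and only if ind_{π*}(pw_j) ≤ B*, where ind_{π*}(pw) denotes the position of pw in the order π*. -/
/- Context: P finite set of passwords, p a probability distribution on P,
strategies (π, B) with π : Fin (Fintype.card P) ≃ P (0-indexed bijection) and B ≤ |P|.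
λ(π, B) = Σ_{i=1}^{B} p(π(i)), and
U(v,k,π,B) = v·λ(π,B) − k·Σ_{i=1}^{B} (1 − λ(π, i−1)).
The (1-indexed) position of pw in π is ind_π(pw) = (π.symm pw : ℕ) + 1. -/

variable {P : Type*} [Fintype P]

/-
Let q be the last guess of the budget B and y a password outside it. Stopping after q
rather than before it means k (1 - λ(B - 1)) ≤ v p(q), and the left side is positive since y
is unguessed, so v p(q) > 0. Not going on with y means
v p(y) ≤ k (1 - λ(B)) = k (1 - λ(B - 1)) - k p(q). An optimal order guesses its budget in
nonincreasing probability (an exchange argument), so if a password x with p(x) = p(y) is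
inside the budget then v p(q) ≤ v p(y), and the two inequalities give k p(q) ≤ 0.
-/

open Finset

section

variable (p : P → ℝ) (π : Fin (Fintype.card P) ≃ P)

lemma lam_succ (B : ℕ) (hB : B < Fintype.card P) :
    lam p π (B + 1) = lam p π B + p (π ⟨B, hB⟩) := by
  have hset : univ.filter (fun i : Fin (Fintype.card P) => (i : ℕ) < B + 1)
      = insert ⟨B, hB⟩ (univ.filter fun i : Fin (Fintype.card P) => (i : ℕ) < B) := by
    ext i
    simp only [mem_insert, mem_filter, mem_univ, true_and, Fin.ext_iff]
    omega
  rw [lam, lam, hset, sum_insert (by simp), add_comm]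

lemma lam_add_le_one (hp : ∀ pw, 0 ≤ p pw) (hsum : ∑ pw, p pw = 1) {B : ℕ} {y : P}
    (hy : B ≤ (π.symm y : ℕ)) : lam p π B + p y ≤ 1 := by
  have hy' : π.symm y ∉ univ.filter fun i : Fin (Fintype.card P) => (i : ℕ) < B := by simp [hy]
  calc lam p π B + p y
      = ∑ i ∈ insert (π.symm y) (univ.filter fun i : Fin _ => (i : ℕ) < B), p (π i) := by
        rw [sum_insert hy', π.apply_symm_apply, lam, add_comm]
    _ ≤ ∑ i, p (π i) := sum_le_sum_of_subset_of_nonneg (subset_univ _) fun i _ _ => hp _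
    _ = 1 := by rw [π.sum_comp p, hsum]

lemma lam_swap_of_lt_iff_lt {j₀ j₁ : Fin (Fintype.card P)} {B : ℕ}
    (h : (j₀ : ℕ) < B ↔ (j₁ : ℕ) < B) :
    lam p ((Equiv.swap j₀ j₁).trans π) B = lam p π B := by
  refine sum_equiv (Equiv.swap j₀ j₁) (fun i => ?_) (fun i _ => rfl)
  simp only [mem_filter, mem_univ, true_and, Equiv.swap_apply_def]
  split_ifs with h₀ h₁ <;> subst_vars <;> tauto

lemma lam_swap_of_lt_of_le {j₀ j₁ : Fin (Fintype.card P)} {B : ℕ}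
    (h₀ : (j₀ : ℕ) < B) (h₁ : B ≤ (j₁ : ℕ)) :
    lam p ((Equiv.swap j₀ j₁).trans π) B = lam p π B - p (π j₀) + p (π j₁) := by
  have hj₀ : j₀ ∈ univ.filter fun i : Fin (Fintype.card P) => (i : ℕ) < B := by simp [h₀]
  have hrest : ∀ i ∈ (univ.filter fun i : Fin (Fintype.card P) => (i : ℕ) < B).erase j₀,
      p ((Equiv.swap j₀ j₁).trans π i) = p (π i) := by
    intro i hi
    simp only [mem_erase, mem_filter, mem_univ, true_and] at hi
    rw [Equiv.trans_apply, Equiv.swap_apply_of_ne_of_ne hi.1 (by rintro rfl; omega)]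
  rw [lam, lam, ← add_sum_erase _ _ hj₀, ← add_sum_erase _ _ hj₀, sum_congr rfl hrest]
  simp only [Equiv.trans_apply, Equiv.swap_apply_left]
  ring

lemma lam_le_lam_swap {j₀ j₁ : Fin (Fintype.card P)} (hj : j₀ ≤ j₁)
    (hprob : p (π j₀) ≤ p (π j₁)) (B : ℕ) :
    lam p π B ≤ lam p ((Equiv.swap j₀ j₁).trans π) B := by
  by_cases h : (j₀ : ℕ) < B ∧ B ≤ (j₁ : ℕ)
  · rw [lam_swap_of_lt_of_le p π h.1 h.2]
    linarith
  · rw [lam_swap_of_lt_iff_lt p π (by rw [Fin.le_def] at hj; omega)]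

lemma U_succ (v k : ℝ) (B : ℕ) (hB : B < Fintype.card P) :
    U p v k π (B + 1) = U p v k π B + v * p (π ⟨B, hB⟩) - k * (1 - lam p π B) := by
  rw [U, U, lam_succ p π B hB, sum_range_succ]
  ring

lemma U_congr {π' : Fin (Fintype.card P) ≃ P} (v k : ℝ) {B : ℕ}
    (h : ∀ i ≤ B, lam p π i = lam p π' i) :
    U p v k π B = U p v k π' B := by
  rw [U, U, h B le_rfl, sum_congr rfl fun i hi => by rw [h i (mem_range.mp hi).le]]

end

def IsOptimalStrategy (p : P → ℝ) (v k : ℝ) (πs : Fin (Fintype.card P) ≃ P) (Bs : ℕ) : Prop :=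
  ∀ (π : Fin (Fintype.card P) ≃ P) (B : ℕ), B ≤ Fintype.card P → U p v k π B ≤ U p v k πs Bs

namespace IsOptimalStrategy

variable {p : P → ℝ} {v k : ℝ} {πs : Fin (Fintype.card P) ≃ P} {Bs : ℕ}

lemma cost_le_gain_last (hopt : IsOptimalStrategy p v k πs (Bs + 1))
    (hBs : Bs < Fintype.card P) :
    k * (1 - lam p πs Bs) ≤ v * p (πs ⟨Bs, hBs⟩) := by
  have := hopt πs Bs hBs.le
  rw [U_succ p πs v k Bs hBs] at this
  linarith

lemma gain_le_cost_of_unguessed (hopt : IsOptimalStrategy p v k πs Bs) {y : P}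
    (hy : Bs ≤ (πs.symm y : ℕ)) : v * p y ≤ k * (1 - lam p πs Bs) := by
  have hBs : Bs < Fintype.card P := hy.trans_lt (πs.symm y).isLt
  set π : Fin (Fintype.card P) ≃ P := (Equiv.swap ⟨Bs, hBs⟩ (πs.symm y)).trans πs
  have hprefix : ∀ i ≤ Bs, lam p π i = lam p πs i := fun i hi =>
    lam_swap_of_lt_iff_lt p πs (by simp only; omega)
  have hnext : π ⟨Bs, hBs⟩ = y := by simp [π]
  have := hopt π (Bs + 1) hBs
  rw [U_succ p π v k Bs hBs, hnext, U_congr p π v k hprefix, hprefix Bs le_rfl] at this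
  linarith

lemma prob_antitone (hopt : IsOptimalStrategy p v k πs Bs) (hk : 0 < k)
    (hBs : Bs ≤ Fintype.card P) {j₀ j₁ : Fin (Fintype.card P)} (hj : j₀ ≤ j₁)
    (hj₁ : (j₁ : ℕ) < Bs) :
    p (πs j₁) ≤ p (πs j₀) := by
  rcases hj.eq_or_lt with rfl | hlt
  · exact le_rfl
  by_contra! hprob
  rw [Fin.lt_def] at hlt
  set π := (Equiv.swap j₀ j₁).trans πs
  have hcost : ∑ i ∈ range Bs, (1 - lam p π i) < ∑ i ∈ range Bs, (1 - lam p πs i) := by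
    refine sum_lt_sum (fun i _ => by linarith [lam_le_lam_swap p πs hj hprob.le i])
      ⟨j₀ + 1, mem_range.mpr (by omega), ?_⟩
    rw [lam_swap_of_lt_of_le p πs (Nat.lt_succ_self _) hlt]
    linarith
  have hreach : lam p π Bs = lam p πs Bs := lam_swap_of_lt_iff_lt p πs (by omega)
  have := hopt π Bs hBs
  rw [U, U, hreach] at this
  linarith [mul_lt_mul_of_pos_left hcost hk]

lemma mem_budget_of_prob_eq (hopt : IsOptimalStrategy p v k πs Bs)
    (hp : ∀ pw, 0 ≤ p pw) (hsum : ∑ pw, p pw = 1) (hk : 0 < k) {x y : P}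
    (heq : p x = p y) (hpos : 0 < p x) (hx : (πs.symm x : ℕ) + 1 ≤ Bs) :
    (πs.symm y : ℕ) + 1 ≤ Bs := by
  by_contra! hy
  obtain ⟨m, rfl⟩ : ∃ m, Bs = m + 1 := ⟨Bs - 1, by omega⟩
  have hm : m < Fintype.card P := by have := (πs.symm y).isLt; omega
  set q := p (πs ⟨m, hm⟩)
  have hstop := hopt.cost_le_gain_last hm
  have hgo := hopt.gain_le_cost_of_unguessed (y := y) (by omega)
  have hq : q ≤ p y := by
    have := hopt.prob_antitone hk (by omega) (j₀ := πs.symm x) (j₁ := ⟨m, hm⟩)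
      (Fin.le_def.mpr (by simp only; omega)) (by simp)
    rwa [πs.apply_symm_apply, heq] at this
  have hunguessed := lam_add_le_one p πs hp hsum (B := m + 1) (y := y) (by omega)
  rw [lam_succ p πs m hm] at hgo hunguessed
  have hq₀ : 0 ≤ q := hp _
  have hvq : 0 < v * q := by nlinarith
  have hv : 0 < v := pos_of_mul_pos_left hvq hq₀
  nlinarith [mul_le_mul_of_nonneg_left hq hv.le]

end IsOptimalStrategy

theorem equivalence_class_atomic_general (p : P → ℝ) (hp : ∀ pw, 0 ≤ p pw)
    (hsum : ∑ pw, p pw = 1) (v k : ℝ) (hk : 0 < k)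
    (πs : Fin (Fintype.card P) ≃ P) (Bs : ℕ)
    (hopt : ∀ (π : Fin (Fintype.card P) ≃ P) (B : ℕ), B ≤ Fintype.card P →
      U p v k π B ≤ U p v k πs Bs)
    (pwi pwj : P) (heq : p pwi = p pwj) (hpos : 0 < p pwi) :
    ((πs.symm pwi : ℕ) + 1 ≤ Bs ↔ (πs.symm pwj : ℕ) + 1 ≤ Bs) :=
  have hopt : IsOptimalStrategy p v k πs Bs := hopt
  ⟨hopt.mem_budget_of_prob_eq hp hsum hk heq hpos,
    hopt.mem_budget_of_prob_eq hp hsum hk heq.symm (heq ▸ hpos)⟩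

/-- Theorem 1 (equivalence classes are checked atomically): let v ≥ 0, k > 0, and
let (π*, B*) be an optimal strategy. If p(pw_i) = p(pw_j) > 0 then
ind_{π*}(pw_i) ≤ B* ⟺ ind_{π*}(pw_j) ≤ B*. -/
theorem equivalence_class_atomic (p : P → ℝ) (hp : ∀ pw, 0 ≤ p pw)
    (hsum : ∑ pw, p pw = 1) (v k : ℝ) (hv : 0 ≤ v) (hk : 0 < k)
    (πs : Fin (Fintype.card P) ≃ P) (Bs : ℕ) (hBs : Bs ≤ Fintype.card P)
    (hopt : ∀ (π : Fin (Fintype.card P) ≃ P) (B : ℕ), B ≤ Fintype.card P →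
      U p v k π B ≤ U p v k πs Bs)
    (pwi pwj : P) (heq : p pwi = p pwj) (hpos : 0 < p pwi) :
    ((πs.symm pwi : ℕ) + 1 ≤ Bs ↔ (πs.symm pwj : ℕ) + 1 ≤ Bs) :=
  equivalence_class_atomic_general p hp hsum v k hk πs Bs hopt pwi pwj heq hpos
end

section
/- The attacker gives up on signal Sig = 1: if k > 0 and 0 < ε < k/3, then for every natural number B ≥ 1 the conditional utility at v = 2k + ε satisfies −k/3 + ε·(1 − 2^{2−B}/3) < 0; hence U_1(2k+ε, k, B) < 0 = U_1(2k+ε, k, 0) for all B ≥ 1, so the unique optimal budget on signal 1 is B* = 0 (the attacker makes no guesses). -/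
noncomputable def U1 (v k : ℝ) (B : ℕ) : ℝ :=
  if B = 0 then 0
  else v * (1 - (2 : ℝ) ^ ((2 : ℤ) - (B : ℤ)) / 3)
        - k * (7 / 3 - (2 : ℝ) ^ ((3 : ℤ) - (B : ℤ)) / 3)

theorem mul_one_sub_two_zpow_div_three_lt {ε : ℝ} (hε : 0 < ε) (n : ℤ) :
    ε * (1 - (2 : ℝ) ^ n / 3) < ε := by
  have hpow : (0 : ℝ) < 2 ^ n := zpow_pos two_pos n
  nlinarith

theorem U1_two_mul_add {B : ℕ} (hB : B ≠ 0) (k ε : ℝ) :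
    U1 (2 * k + ε) k B = -k / 3 + ε * (1 - (2 : ℝ) ^ ((2 : ℤ) - (B : ℤ)) / 3) := by
  have hpow : (2 : ℝ) ^ ((3 : ℤ) - (B : ℤ)) = 2 * 2 ^ ((2 : ℤ) - (B : ℤ)) := by
    rw [show (3 : ℤ) - B = 1 + (2 - B) by ring, zpow_add₀ two_ne_zero, zpow_one]
  rw [U1, if_neg hB, hpow]
  ring

theorem attacker_gives_up_on_signal_one_general (k ε : ℝ) (hε : 0 < ε)
    (hεk : ε < k / 3) :
    (∀ B : ℕ, 1 ≤ B → -k / 3 + ε * (1 - (2 : ℝ) ^ ((2 : ℤ) - (B : ℤ)) / 3) < 0) ∧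
    (∀ B : ℕ, 1 ≤ B → U1 (2 * k + ε) k B < 0) ∧
    U1 (2 * k + ε) k 0 = 0 ∧
    (∀ B : ℕ, 1 ≤ B → U1 (2 * k + ε) k B < U1 (2 * k + ε) k 0) := by
  have hgain (B : ℕ) : -k / 3 + ε * (1 - (2 : ℝ) ^ ((2 : ℤ) - (B : ℤ)) / 3) < 0 := by
    linarith [mul_one_sub_two_zpow_div_three_lt hε ((2 : ℤ) - B)]
  have hU0 : U1 (2 * k + ε) k 0 = 0 := if_pos rfl
  have hUneg (B : ℕ) (hB : 1 ≤ B) : U1 (2 * k + ε) k B < 0 :=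
    (U1_two_mul_add (Nat.one_le_iff_ne_zero.mp hB) k ε).trans_lt (hgain B)
  exact ⟨fun B _ => hgain B, hUneg, hU0, fun B hB => hU0 ▸ hUneg B hB⟩

/-- The attacker gives up on signal Sig = 1: if k > 0 and 0 < ε < k/3, then for every
B ≥ 1 the conditional utility at v = 2k + ε satisfies
−k/3 + ε·(1 − 2^{2−B}/3) < 0; hence U_1(2k+ε, k, B) < 0 = U_1(2k+ε, k, 0) for all
B ≥ 1, so the unique optimal budget on signal 1 is B* = 0. -/
theorem attacker_gives_up_on_signal_one (k ε : ℝ) (hk : 0 < k) (hε : 0 < ε)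
    (hεk : ε < k / 3) :
    (∀ B : ℕ, 1 ≤ B → -k / 3 + ε * (1 - (2 : ℝ) ^ ((2 : ℤ) - (B : ℤ)) / 3) < 0) ∧
    (∀ B : ℕ, 1 ≤ B → U1 (2 * k + ε) k B < 0) ∧
    U1 (2 * k + ε) k 0 = 0 ∧
    (∀ B : ℕ, 1 ≤ B → U1 (2 * k + ε) k B < U1 (2 * k + ε) k 0) :=
  attacker_gives_up_on_signal_one_general k ε hε hεk
end
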